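/- Let N < d_x, let X, X_ε ∈ ℝ^{d_x×N} both have rank N, and let Y ∈ ℝ^{d_y×N}. Let d_1 ∈ ℕ, set p := min(d_x, d_1, d_y), and assume either rank(Y) ≤ p or the p-th largest eigenvalue of YYᵀ is strictly greater than its (p+1)-th largest eigenvalue. Let λ > 0 and let (W̃_2, W̃_1) ∈ ℝ^{d_y×d_1} × ℝ^{d_1×d_x} be a global minimizer of the clean loss ‖W_2W_1X − Y‖_F². Then every global minimizer (W_2, W_1) of the student-teacher loss ‖W_2W_1X_ε − Y‖_F² + λ‖W_1X_ε − W̃_1X‖_F² is also a global minimizer of the base loss ‖W_2W_1X_ε − Y‖_F². -/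

import Mathlib

/-!
Since `X` and `X_ε` both have full column rank `N`, right multiplication by either of them
reaches every `d₁ × N` matrix. Hence the student can copy the teacher exactly, choosing `W₁`
with `W₁X_ε = W̃₁X`: the penalty then vanishes and the student-teacher loss of `(W̃₂, W₁)` is the
minimal clean loss. Conversely every `W₁'X_ε` is some `W₁''X`, so the minimal clean loss is at
most every base loss, while the student-teacher loss dominates the base loss.
-/

open Matrix

noncomputable section

/-- Squared Frobenius norm ‖M‖_F² of a real matrix. -/
def frobSq {m n : ℕ} (M : Matrix (Fin m) (Fin n) ℝ) : ℝ := ∑ i, ∑ j, (M i j) ^ 2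

namespace Matrix

theorem isUnit_of_rank_eq_card {K n : Type*} [Field K] [Fintype n] [DecidableEq n]
    {A : Matrix n n K} (h : A.rank = Fintype.card n) : IsUnit A := by
  rw [← mulVec_surjective_iff_isUnit]
  change Function.Surjective A.mulVecLin
  rw [← LinearMap.range_eq_top]
  exact Submodule.eq_top_of_finrank_eq (by rw [← rank, h, Module.finrank_fintype_fun_eq_card])

variable {R l m n : Type*} [Field R] [LinearOrder R] [IsStrictOrderedRing R]
  [Fintype m] [Fintype n] [DecidableEq n]

theorem exists_mul_eq_one_of_rank_eq_card {A : Matrix m n R} (h : A.rank = Fintype.card n) :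
    ∃ L : Matrix n m R, L * A = 1 := by
  have hGram : IsUnit (Aᵀ * A) := isUnit_of_rank_eq_card (by rw [rank_transpose_mul_self, h])
  refine ⟨(Aᵀ * A)⁻¹ * Aᵀ, ?_⟩
  rw [Matrix.mul_assoc, nonsing_inv_mul _ ((isUnit_iff_isUnit_det _).mp hGram)]

theorem exists_mul_eq_of_rank_eq_card {A : Matrix m n R} (h : A.rank = Fintype.card n)
    (B : Matrix l n R) : ∃ W : Matrix l m R, W * A = B := by
  obtain ⟨L, hL⟩ := exists_mul_eq_one_of_rank_eq_card h
  exact ⟨B * L, by rw [Matrix.mul_assoc, hL, Matrix.mul_one]⟩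

end Matrix

theorem frobSq_nonneg {m n : ℕ} (M : Matrix (Fin m) (Fin n) ℝ) : 0 ≤ frobSq M := by
  unfold frobSq
  positivity

@[simp]
theorem frobSq_zero {m n : ℕ} : frobSq (0 : Matrix (Fin m) (Fin n) ℝ) = 0 := by
  simp [frobSq]

theorem stmt5
    (N dx dy d1 : ℕ)
    (X Xε : Matrix (Fin dx) (Fin N) ℝ) (hX : X.rank = N) (hXε : Xε.rank = N)
    (Y : Matrix (Fin dy) (Fin N) ℝ)
    (lam : ℝ) (hlam : 0 < lam)
    (Wt2 : Matrix (Fin dy) (Fin d1) ℝ) (Wt1 : Matrix (Fin d1) (Fin dx) ℝ)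
    (hteacher : ∀ (W2' : Matrix (Fin dy) (Fin d1) ℝ) (W1' : Matrix (Fin d1) (Fin dx) ℝ),
        frobSq (Wt2 * Wt1 * X - Y) ≤ frobSq (W2' * W1' * X - Y))
    (W2 : Matrix (Fin dy) (Fin d1) ℝ) (W1 : Matrix (Fin d1) (Fin dx) ℝ)
    (hmin : ∀ (W2' : Matrix (Fin dy) (Fin d1) ℝ) (W1' : Matrix (Fin d1) (Fin dx) ℝ),
        frobSq (W2 * W1 * Xε - Y) + lam * frobSq (W1 * Xε - Wt1 * X)
          ≤ frobSq (W2' * W1' * Xε - Y) + lam * frobSq (W1' * Xε - Wt1 * X)) :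
    ∀ (W2' : Matrix (Fin dy) (Fin d1) ℝ) (W1' : Matrix (Fin d1) (Fin dx) ℝ),
      frobSq (W2 * W1 * Xε - Y) ≤ frobSq (W2' * W1' * Xε - Y) := by
  intro W2' W1'
  obtain ⟨W1copy, hW1copy⟩ :=
    exists_mul_eq_of_rank_eq_card (hXε.trans (Fintype.card_fin N).symm) (Wt1 * X)
  obtain ⟨W1clean, hW1clean⟩ :=
    exists_mul_eq_of_rank_eq_card (hX.trans (Fintype.card_fin N).symm) (W1' * Xε)
  calc frobSq (W2 * W1 * Xε - Y)
      ≤ frobSq (W2 * W1 * Xε - Y) + lam * frobSq (W1 * Xε - Wt1 * X) :=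
        le_add_of_nonneg_right (mul_nonneg hlam.le (frobSq_nonneg _))
    _ ≤ frobSq (Wt2 * W1copy * Xε - Y) + lam * frobSq (W1copy * Xε - Wt1 * X) := hmin _ _
    _ = frobSq (Wt2 * Wt1 * X - Y) := by
        rw [Matrix.mul_assoc Wt2, hW1copy, sub_self, frobSq_zero, mul_zero, add_zero,
          Matrix.mul_assoc]
    _ ≤ frobSq (W2' * W1clean * X - Y) := hteacher _ _
    _ = frobSq (W2' * W1' * Xε - Y) := by rw [Matrix.mul_assoc, hW1clean, Matrix.mul_assoc]
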